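/- For n ≥ 3, the dynamic chromatic number of the cycle C_{2n} equals 3 if n ≡ 0 (mod 3) and 4 otherwise. -/

import Mathlib

open Finset

open scoped Classical in
noncomputable def deg {V : Type*} [Fintype V] (G : SimpleGraph V) (v : V) : ℕ :=
  (Finset.univ.filter (fun u => G.Adj v u)).card

def IsProper {V : Type*} (G : SimpleGraph V) (c : V → ℕ) : Prop :=
  ∀ u v, G.Adj u v → c u ≠ c v

def IsDynamic {V : Type*} [Fintype V] (G : SimpleGraph V) (c : V → ℕ) : Prop :=
  IsProper G c ∧ ∀ v, 2 ≤ deg G v → ∃ a b, G.Adj v a ∧ G.Adj v b ∧ c a ≠ c b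

noncomputable def chrom {V : Type*} (G : SimpleGraph V) : ℕ :=
  sInf {n | ∃ c : V → ℕ, (∀ v, c v < n) ∧ IsProper G c}

noncomputable def dynChrom {V : Type*} [Fintype V] (G : SimpleGraph V) : ℕ :=
  sInf {n | ∃ c : V → ℕ, (∀ v, c v < n) ∧ IsDynamic G c}

def subdiv {V : Type*} (G : SimpleGraph V) : SimpleGraph (V ⊕ G.edgeSet) where
  Adj x y :=
    match x, y with
    | Sum.inl u, Sum.inr e => u ∈ (e : Sym2 V)
    | Sum.inr e, Sum.inl u => u ∈ (e : Sym2 V)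
    | _, _ => False
  symm := ⟨by rintro (u | e) (v | f) h <;> first | exact h | exact h.elim⟩
  loopless := ⟨by rintro (u | e) h <;> exact h⟩

noncomputable instance {V : Type*} [Fintype V] (G : SimpleGraph V) : Fintype G.edgeSet :=
  Fintype.ofFinite _

/-!
In a dynamic colouring of a cycle every vertex sees two different colours, so any three
consecutive vertices get three distinct colours. With three colours this makes the colouring
3-periodic along the cycle, which is impossible unless 3 divides the length, since otherwise 3 is
invertible modulo the length and the colouring would be constant. Conversely, writing the length
as `3a + 4b` (possible for every length except 5), the colouring `012⋯012 0123⋯0123` with `a`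
blocks of the first kind and `b` of the second is dynamic, and uses three colours when `b = 0`.
-/

open SimpleGraph

lemma deg_eq_degree {V : Type*} [Fintype V] (G : SimpleGraph V) [DecidableRel G.Adj] (v : V) :
    deg G v = G.degree v := by
  rw [← card_neighborFinset_eq_degree, neighborFinset_eq_filter, deg]
  congr

lemma dynChrom_eq_of_forall_le {V : Type*} [Fintype V] {G : SimpleGraph V} {k : ℕ}
    (hex : ∃ c : V → ℕ, (∀ v, c v < k) ∧ IsDynamic G c)
    (hle : ∀ (c : V → ℕ) (j : ℕ), (∀ v, c v < j) → IsDynamic G c → k ≤ j) :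
    dynChrom G = k :=
  le_antisymm (Nat.sInf_le hex) (le_csInf ⟨k, hex⟩ fun j ⟨c, hc, hd⟩ => hle c j hc hd)

lemma cycleGraph_adj_iff {k : ℕ} {v w : Fin (k + 2)} :
    (cycleGraph (k + 2)).Adj v w ↔ w = v - 1 ∨ w = v + 1 := by
  rw [← mem_neighborSet, cycleGraph_neighborSet]
  rfl

section CycleGraph

variable {k : ℕ} {c : Fin (k + 3) → ℕ}

lemma isDynamic_cycleGraph_iff :
    IsDynamic (cycleGraph (k + 3)) c ↔ ∀ v, c v ≠ c (v + 1) ∧ c v ≠ c (v + 2) := by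
  have two : ∀ v : Fin (k + 3), v + 2 = v + 1 + 1 := fun v => by abel
  constructor
  · rintro ⟨hproper, hdyn⟩ v
    refine ⟨hproper _ _ (cycleGraph_adj_iff.2 (Or.inr rfl)), ?_⟩
    obtain ⟨a, b, ha, hb, hab⟩ :=
      hdyn (v + 1) (by rw [deg_eq_degree, cycleGraph_degree_three_le])
    rw [cycleGraph_adj_iff, add_sub_cancel_right, ← two] at ha hb
    rcases ha with rfl | rfl <;> rcases hb with rfl | rfl
    exacts [absurd rfl hab, hab, hab.symm, absurd rfl hab]
  · intro h
    refine ⟨fun u w huw => ?_, fun v _ => ⟨v - 1, v + 1, ?_, ?_, ?_⟩⟩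
    · rcases cycleGraph_adj_iff.1 huw with rfl | rfl
      · simpa using (h (u - 1)).1.symm
      · exact (h u).1
    · exact cycleGraph_adj_iff.2 (Or.inl rfl)
    · exact cycleGraph_adj_iff.2 (Or.inr rfl)
    · simpa [two] using (h (v - 1)).2

namespace IsDynamic

variable (hc : IsDynamic (cycleGraph (k + 3)) c)
include hc

lemma consecutive_ne (v : Fin (k + 3)) :
    c v ≠ c (v + 1) ∧ c (v + 1) ≠ c (v + 2) ∧ c v ≠ c (v + 2) := by
  obtain ⟨h01, h02⟩ := isDynamic_cycleGraph_iff.1 hc v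
  have h12 := (isDynamic_cycleGraph_iff.1 hc (v + 1)).1
  rw [add_assoc] at h12
  exact ⟨h01, h12, h02⟩

lemma three_le_of_cycleGraph {j : ℕ} (hj : ∀ v, c v < j) : 3 ≤ j := by
  obtain ⟨h01, h12, h02⟩ := hc.consecutive_ne 0
  have := hj 0; have := hj (0 + 1); have := hj (0 + 2)
  omega

lemma periodic_of_cycleGraph_of_lt_three (h3 : ∀ v, c v < 3) : Function.Periodic c 3 := by
  intro v
  obtain ⟨h01, h12, h02⟩ := hc.consecutive_ne v
  obtain ⟨-, h23, h13⟩ := hc.consecutive_ne (v + 1)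
  have e2 : v + 1 + 1 = v + 2 := by rw [add_assoc]; rfl
  have e3 : v + 1 + 2 = v + 3 := by rw [add_assoc]; rfl
  rw [e2, e3] at h23
  rw [e3] at h13
  have := h3 v; have := h3 (v + 1); have := h3 (v + 2); have := h3 (v + 3)
  omega

open Fin.NatCast Fin.CommRing in
lemma three_dvd_of_cycleGraph_of_lt_three (h3 : ∀ v, c v < 3) : 3 ∣ k + 3 := by
  by_contra hndvd
  have hcop : Nat.Coprime 3 (k + 3) :=
    (Nat.Prime.coprime_iff_not_dvd Nat.prime_three).2 hndvd
  obtain ⟨i, -, hi⟩ := Nat.exists_mul_mod_eq_one_of_coprime hcop (by omega)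
  have hone : (i : Fin (k + 3)) * 3 = 1 := by
    ext
    rw [Fin.val_one, ← hi, Fin.val_mul, Fin.val_natCast, mul_comm, Nat.mul_mod]
    simp
  have h10 : c 1 = c 0 := by
    simpa [hone] using (hc.periodic_of_cycleGraph_of_lt_three h3).nat_mul i 0
  exact (isDynamic_cycleGraph_iff.1 hc 0).1 (by simpa using h10.symm)

end IsDynamic

def blockColoring (a x : ℕ) : ℕ := if x < 3 * a then x % 3 else (x - 3 * a) % 4

lemma blockColoring_lt_four (a x : ℕ) : blockColoring a x < 4 := by
  unfold blockColoring; split_ifs <;> omega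

lemma blockColoring_lt_three {a x : ℕ} (hx : x < 3 * a) : blockColoring a x < 3 := by
  simp only [blockColoring, if_pos hx]; omega

lemma isDynamic_blockColoring {a b : ℕ} (hab : k + 3 = 3 * a + 4 * b) :
    IsDynamic (cycleGraph (k + 3)) fun v => blockColoring a v := by
  refine isDynamic_cycleGraph_iff.2 fun v => ?_
  have := v.isLt
  rw [Fin.val_add_eq_ite, Fin.val_add_eq_ite, Fin.val_one, Fin.val_two]
  unfold blockColoring
  split_ifs <;> omega

lemma exists_isDynamic_cycleGraph (hk : k ≠ 2) :
    ∃ c : Fin (k + 3) → ℕ,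
      (∀ v, c v < if 3 ∣ k + 3 then 3 else 4) ∧ IsDynamic (cycleGraph (k + 3)) c := by
  split_ifs with hdvd
  · obtain ⟨a, ha⟩ := hdvd
    exact ⟨_, fun v => blockColoring_lt_three (a := a) (by have := v.isLt; omega),
      isDynamic_blockColoring (b := 0) (by omega)⟩
  · obtain ⟨a, b, hab⟩ : ∃ a b, k + 3 = 3 * a + 4 * b := by
      rcases (by omega : (k + 3) % 3 = 1 ∨ (k + 3) % 3 = 2) with h | h
      · exact ⟨(k - 1) / 3, 1, by omega⟩
      · exact ⟨(k - 5) / 3, 2, by omega⟩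
    exact ⟨_, fun v => blockColoring_lt_four a v, isDynamic_blockColoring hab⟩

end CycleGraph

theorem dynChrom_cycleGraph {k : ℕ} (hk : k ≠ 2) :
    dynChrom (cycleGraph (k + 3)) = if 3 ∣ k + 3 then 3 else 4 := by
  refine dynChrom_eq_of_forall_le (exists_isDynamic_cycleGraph hk) fun c j hj hc => ?_
  have h3 := hc.three_le_of_cycleGraph hj
  split_ifs with hdvd
  · exact h3
  · by_contra hlt
    exact hdvd (hc.three_dvd_of_cycleGraph_of_lt_three fun v => (hj v).trans_le (by omega))

theorem dynChrom_cycleGraph_even (n : ℕ) (hn : 3 ≤ n) :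
    dynChrom (SimpleGraph.cycleGraph (2 * n)) =
      if n % 3 = 0 then 3 else 4 := by
  obtain ⟨k, hk⟩ : ∃ k, 2 * n = k + 3 := ⟨2 * n - 3, by omega⟩
  have hdvd : 3 ∣ k + 3 ↔ n % 3 = 0 := by omega
  rw [hk, dynChrom_cycleGraph (by omega), if_congr hdvd rfl rfl]
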